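/- arXiv:1508.00069 — 3 statements merged into one kernel-verified Lean document; each statement's English description precedes it below -/
import Mathlib

section
/- Let A be a strictly semi-positive real tensor of order m and dimension n (with m ≥ 2, n ≥ 1). Then for every q ∈ ℝⁿ the solution set of the tensor complementarity problem TCP(A,q) is bounded. -/
open Finset

/-- The `i`-th component of `A x^{m-1}` for a real tensor `A` of order `m = k+1`
and dimension `n`. -/
def tmul {n k : ℕ} (A : (Fin (k + 1) → Fin n) → ℝ) (x : Fin n → ℝ) : Fin n → ℝ :=
  fun i => ∑ f : Fin k → Fin n, A (Fin.cons i f) * ∏ j, x (f j)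

/-- `A x^m := xᵀ (A x^{m-1})`. -/
def tpow {n k : ℕ} (A : (Fin (k + 1) → Fin n) → ℝ) (x : Fin n → ℝ) : ℝ :=
  ∑ i, x i * tmul A x i

/-- `x` is a solution of the tensor complementarity problem TCP(A, q). -/
def TCPSol {n k : ℕ} (A : (Fin (k + 1) → Fin n) → ℝ) (q x : Fin n → ℝ) : Prop :=
  (∀ i, 0 ≤ x i) ∧ (∀ i, 0 ≤ q i + tmul A x i) ∧ ∑ i, x i * (q i + tmul A x i) = 0

/-- `A` is an S-tensor: the system `A x^{m-1} > 0, x > 0` has a solution. -/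
def STensor {n k : ℕ} (A : (Fin (k + 1) → Fin n) → ℝ) : Prop :=
  ∃ x : Fin n → ℝ, (∀ i, 0 < x i) ∧ ∀ i, 0 < tmul A x i

/-- `A` is strictly semi-positive. -/
def StrictlySemiPositive {n k : ℕ} (A : (Fin (k + 1) → Fin n) → ℝ) : Prop :=
  ∀ x : Fin n → ℝ, (∀ i, 0 ≤ x i) → x ≠ 0 → ∃ j, 0 < x j ∧ 0 < tmul A x j

/-- `A` is an R₀-tensor: `x = 0` is the unique solution of TCP(A, 0). -/
def R0Tensor {n k : ℕ} (A : (Fin (k + 1) → Fin n) → ℝ) : Prop :=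
  ∀ x : Fin n → ℝ, TCPSol A (fun _ => 0) x ↔ x = 0

/-- `A` is a symmetric tensor: entries invariant under permutations of the indices. -/
def TSymmetric {n k : ℕ} (A : (Fin (k + 1) → Fin n) → ℝ) : Prop :=
  ∀ (σ : Equiv.Perm (Fin (k + 1))) (g : Fin (k + 1) → Fin n), A (g ∘ σ) = A g

/-- The `p`-norm `(∑ |x_i|^p)^{1/p}` of a vector. -/
noncomputable def pnorm {n : ℕ} (p : ℝ) (x : Fin n → ℝ) : ℝ :=
  (∑ i, |x i| ^ p) ^ (1 / p)

/-- The `∞`-norm `max_i |x_i|` of a vector. -/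
noncomputable def inftynorm {n : ℕ} (x : Fin n → ℝ) : ℝ :=
  ⨆ i, |x i|

lemma tmul_smul' {n k : ℕ} (A : (Fin (k + 1) → Fin n) → ℝ) (c : ℝ) (x : Fin n → ℝ)
    (i : Fin n) : tmul A (c • x) i = c ^ k * tmul A x i := by
  unfold tmul
  rw [Finset.mul_sum]
  refine Finset.sum_congr rfl fun f _ => ?_
  simp only [Pi.smul_apply, smul_eq_mul, Finset.prod_mul_distrib, Finset.prod_const,
    Finset.card_univ, Fintype.card_fin]
  ring

lemma continuous_tmul' {n k : ℕ} (A : (Fin (k + 1) → Fin n) → ℝ) (i : Fin n) :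
    Continuous fun x : Fin n → ℝ => tmul A x i :=
  continuous_finset_sum _ fun f _ =>
    continuous_const.mul (continuous_finset_prod _ fun j _ => continuous_apply (f j))



open Bornology in
theorem stmt5 {n k : ℕ} (hn : 1 ≤ n) (hk : 1 ≤ k) (A : (Fin (k + 1) → Fin n) → ℝ)
    (hA : StrictlySemiPositive A) (q : Fin n → ℝ) :
    Bornology.IsBounded {x : Fin n → ℝ | TCPSol A q x} := by
  by_contra hB
  rw [isBounded_iff_forall_norm_le] at hB
  push_neg at hB
  choose x hxS hxn using fun t : ℕ => hB (t + 1)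
  -- normalize
  have hxpos : ∀ t : ℕ, (0:ℝ) < ‖x t‖ := fun t =>
    lt_of_le_of_lt (by positivity) (hxn t)
  set y : ℕ → (Fin n → ℝ) := fun t => (‖x t‖)⁻¹ • x t with hy
  have hysphere : ∀ t, y t ∈ Metric.sphere (0 : Fin n → ℝ) 1 := by
    intro t
    simp only [Metric.mem_sphere, dist_zero_right, hy, norm_smul, norm_inv, norm_norm]
    exact inv_mul_cancel₀ (hxpos t).ne'
  obtain ⟨y₀, hy₀mem, φ, hφ, hconv⟩ :=
    (isCompact_sphere (0 : Fin n → ℝ) 1).tendsto_subseq hysphere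
  have hy₀norm : ‖y₀‖ = 1 := by simpa using hy₀mem
  have hy₀ne : y₀ ≠ 0 := by
    intro h; rw [h] at hy₀norm; simp at hy₀norm
  have hconvi : ∀ i : Fin n, Filter.Tendsto (fun t => y (φ t) i) Filter.atTop (nhds (y₀ i)) :=
    fun i => ((continuous_apply i).tendsto y₀).comp hconv
  have hynn : ∀ t i, 0 ≤ y t i := fun t i => by
    have := (hxS t).1 i
    have : 0 ≤ (‖x t‖)⁻¹ * x t i := mul_nonneg (by positivity) this
    simpa [hy] using this
  have hy₀nn : ∀ i, 0 ≤ y₀ i := fun i =>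
    ge_of_tendsto (hconvi i) (Filter.Eventually.of_forall fun t => hynn (φ t) i)
  obtain ⟨j, hyj, htj⟩ := hA y₀ hy₀nn hy₀ne
  set c : ℝ := tmul A y₀ j / 2 with hc
  have hcpos : 0 < c := by positivity
  have E1 : ∀ᶠ t in Filter.atTop, 0 < y (φ t) j :=
    (hconvi j).eventually (eventually_gt_nhds hyj)
  have E2 : ∀ᶠ t in Filter.atTop, c < tmul A (y (φ t)) j := by
    have : Filter.Tendsto (fun t => tmul A (y (φ t)) j) Filter.atTop (nhds (tmul A y₀ j)) :=
      ((continuous_tmul' A j).tendsto y₀).comp hconv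
    exact this.eventually (eventually_gt_nhds (by linarith))
  have E3 : ∀ᶠ t : ℕ in Filter.atTop, (-q j) / c < (t : ℝ) :=
    Filter.Tendsto.eventually_gt_atTop tendsto_natCast_atTop_atTop _
  obtain ⟨t, h1, h2, h3⟩ := (E1.and (E2.and E3)).exists
  -- set up the contradiction at index t
  set X : Fin n → ℝ := x (φ t) with hX
  have hXy : X = ‖X‖ • y (φ t) := by
    rw [hy]
    simp only [smul_smul]
    rw [mul_inv_cancel₀ (hxpos (φ t)).ne', one_smul]
  have hNge : (t : ℝ) + 1 ≤ ‖X‖ := by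
    have h4 : (t : ℝ) ≤ (φ t : ℝ) := by exact_mod_cast hφ.le_apply
    have := hxn (φ t)
    linarith
  have hN1 : (1:ℝ) ≤ ‖X‖ := by
    have : (0:ℝ) ≤ (t:ℝ) := Nat.cast_nonneg t
    linarith
  have hXj : 0 < X j := by
    rw [hXy]
    exact mul_pos (by linarith) h1
  have htmulX : tmul A X j = ‖X‖ ^ k * tmul A (y (φ t)) j := by
    rw [hXy, tmul_smul']
    rw [← hXy]
  have hqpos : 0 < q j + tmul A X j := by
    have hNk : ‖X‖ ≤ ‖X‖ ^ k := le_self_pow₀ hN1 (by omega)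
    have hstep : ((t:ℝ) + 1) * c ≤ ‖X‖ ^ k * tmul A (y (φ t)) j := by
      have h5 : ((t:ℝ) + 1) * c ≤ ‖X‖ * c :=
        mul_le_mul_of_nonneg_right hNge hcpos.le
      have h6 : ‖X‖ * c ≤ ‖X‖ ^ k * c :=
        mul_le_mul_of_nonneg_right hNk hcpos.le
      have h7 : ‖X‖ ^ k * c ≤ ‖X‖ ^ k * tmul A (y (φ t)) j :=
        mul_le_mul_of_nonneg_left h2.le (by positivity)
      linarith
    have h8 : -q j < ((t:ℝ) + 1) * c := by
      have := (div_lt_iff₀ hcpos).mp h3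
      nlinarith
    rw [htmulX]; linarith
  -- complementarity gives term j = 0
  obtain ⟨hx1, hx2, hx3⟩ := hxS (φ t)
  have hterm : X j * (q j + tmul A X j) = 0 := by
    have := (Finset.sum_eq_zero_iff_of_nonneg
      (fun i _ => mul_nonneg (hx1 i) (hx2 i))).mp hx3 j (Finset.mem_univ j)
    exact this
  have : 0 < X j * (q j + tmul A X j) := mul_pos hXj hqpos
  linarith
end

section
/- Let A be a strictly semi-positive real tensor of order m and dimension n (with m ≥ 2, n ≥ 1). Then the quantity β(A) := min over { x ∈ ℝⁿ : x ≥ 0, ‖x‖_∞ = 1 } of max_{1 ≤ i ≤ n} x_i·(A x^{m-1})_i is strictly positive. -/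
open Finset

lemma tmul_cont' {n k : ℕ} (A : (Fin (k + 1) → Fin n) → ℝ) (i : Fin n) :
    Continuous (fun x => tmul A x i) := by
  unfold tmul
  exact continuous_finset_sum _ fun f _ =>
    (continuous_const.mul (continuous_finset_prod _ fun j _ => continuous_apply _))

theorem stmt9 {n k : ℕ} (hn : 1 ≤ n) (hk : 1 ≤ k) (A : (Fin (k + 1) → Fin n) → ℝ)
    (hssp : StrictlySemiPositive A) :
    0 < sInf {r : ℝ | ∃ x : Fin n → ℝ,
      (∀ i, 0 ≤ x i) ∧ inftynorm x = 1 ∧ (⨆ i, x i * tmul A x i) = r} := by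
  have : NeZero n := ⟨by omega⟩
  have hne : (Finset.univ : Finset (Fin n)).Nonempty := univ_nonempty
  -- g
  set g : (Fin n → ℝ) → ℝ := fun x => ⨆ i, x i * tmul A x i with hg
  have hg' : ∀ x, g x = Finset.univ.sup' hne (fun i => x i * tmul A x i) := by
    intro x; rw [Finset.sup'_univ_eq_ciSup]
  have hgc : Continuous g := by
    have : Continuous (fun x : Fin n → ℝ => Finset.univ.sup' hne (fun i => x i * tmul A x i)) :=
      Continuous.finset_sup'_apply hne fun i _ => (continuous_apply i).mul (tmul_cont' A i)
    exact this.congr fun x => (hg' x).symm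
  have hinf : ∀ x : Fin n → ℝ, inftynorm x = Finset.univ.sup' hne (fun i => |x i|) := by
    intro x; rw [Finset.sup'_univ_eq_ciSup]; rfl
  have hinfc : Continuous (inftynorm (n := n)) := by
    have : Continuous (fun x : Fin n → ℝ => Finset.univ.sup' hne (fun i => |x i|)) :=
      Continuous.finset_sup'_apply hne fun i _ => (continuous_apply i).abs
    exact this.congr fun x => (hinf x).symm
  set S : Set (Fin n → ℝ) := {x | (∀ i, 0 ≤ x i) ∧ inftynorm x = 1} with hS
  have hSsub : S ⊆ Set.pi Set.univ (fun _ : Fin n => Set.Icc (0:ℝ) 1) := by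
    rintro x ⟨hx0, hx1⟩ i _
    refine ⟨hx0 i, ?_⟩
    have := le_trans (le_abs_self (x i)) (le_ciSup (f := fun i => |x i|) (Set.Finite.bddAbove (Set.finite_range _)) i)
    rw [show (⨆ i, |x i|) = inftynorm x from rfl, hx1] at this
    exact this
  have hSclosed : IsClosed S := by
    have h1 : IsClosed {x : Fin n → ℝ | ∀ i, 0 ≤ x i} := by
      have : {x : Fin n → ℝ | ∀ i, 0 ≤ x i} = ⋂ i, {x | 0 ≤ x i} := by ext x; simp
      rw [this]
      exact isClosed_iInter fun i => isClosed_le continuous_const (continuous_apply i)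
    exact h1.inter (isClosed_eq hinfc continuous_const)
  have hScompact : IsCompact S :=
    (isCompact_univ_pi fun _ => isCompact_Icc).of_isClosed_subset hSclosed hSsub
  have hSne : S.Nonempty := by
    refine ⟨fun _ => 1, fun i => zero_le_one, ?_⟩
    rw [hinf]
    simp
  have hset : {r : ℝ | ∃ x : Fin n → ℝ,
      (∀ i, 0 ≤ x i) ∧ inftynorm x = 1 ∧ (⨆ i, x i * tmul A x i) = r} = g '' S := by
    ext r
    constructor
    · rintro ⟨x, h1, h2, h3⟩; exact ⟨x, ⟨h1, h2⟩, h3⟩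
    · rintro ⟨x, ⟨h1, h2⟩, h3⟩; exact ⟨x, h1, h2, h3⟩
  rw [hset]
  have himg : IsCompact (g '' S) := hScompact.image hgc
  have hmem := himg.sInf_mem (hSne.image g)
  obtain ⟨x, ⟨hx0, hx1⟩, hxr⟩ := hmem
  rw [← hxr]
  have hxne : x ≠ 0 := by
    intro h
    rw [h] at hx1
    rw [hinf] at hx1
    simp at hx1
  obtain ⟨j, hj1, hj2⟩ := hssp x hx0 hxne
  calc (0:ℝ) < x j * tmul A x j := mul_pos hj1 hj2
    _ ≤ g x := le_ciSup (f := fun i => x i * tmul A x i) (Set.Finite.bddAbove (Set.finite_range _)) j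
end

section
/- Let A be a symmetric strictly copositive real tensor of order m and dimension n (with m ≥ 2, n ≥ 1), and let μ(A) := min{ A y^m : y ≥ 0, ‖y‖₂ = 1 }. Then μ(A) > 0, μ(A) is a Pareto Z-eigenvalue of A, and every Pareto Z-eigenvalue μ of A satisfies μ ≥ μ(A). -/
open Finset

/-- `μ` is a Pareto Z-eigenvalue of the tensor `A` of order `m = k+1`. -/
def ParetoZ {n k : ℕ} (A : (Fin (k + 1) → Fin n) → ℝ) (μ : ℝ) : Prop :=
  ∃ x : Fin n → ℝ, x ≠ 0 ∧ (∀ i, 0 ≤ x i) ∧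
    tpow A x = μ * (∑ i, x i ^ 2) ^ (((k : ℝ) + 1) / 2) ∧
    ∀ i, 0 ≤ tmul A x i - μ * (∑ j, x j ^ 2) ^ (((k : ℝ) + 1) / 2 - 1) * x i

lemma tpow_eq_sum {n k : ℕ} (A : (Fin (k + 1) → Fin n) → ℝ) (x : Fin n → ℝ) :
    tpow A x = ∑ g : Fin (k + 1) → Fin n, A g * ∏ j, x (g j) := by
  rw [← Equiv.sum_comp (Fin.consEquiv (fun _ : Fin (k+1) => Fin n))]
  rw [Fintype.sum_prod_type]
  simp only [tpow, tmul, Fin.consEquiv_apply, Fin.prod_univ_succ, Fin.cons_zero, Fin.cons_succ,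
    Finset.mul_sum]
  congr 1; ext i; congr 1; ext f; simp [Fin.consEquiv]; ring


lemma erase_zero_eq {k : ℕ} : (univ : Finset (Fin (k+1))).erase 0 = univ.map (Fin.succEmb k) := by
  rw [← Fin.Ioi_zero_eq_map]
  ext j; simp [Fin.pos_iff_ne_zero]

lemma prod_erase_zero {k : ℕ} (F : Fin (k+1) → ℝ) :
    ∏ j ∈ (univ : Finset (Fin (k+1))).erase 0, F j = ∏ j : Fin k, F j.succ := by
  rw [erase_zero_eq, Finset.prod_map]; rfl

lemma sum_v_tmul {n k : ℕ} (A : (Fin (k + 1) → Fin n) → ℝ) (x v : Fin n → ℝ) :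
    ∑ g : Fin (k+1) → Fin n, A g * (v (g 0) * ∏ j ∈ (univ : Finset (Fin (k+1))).erase 0, x (g j))
      = ∑ i, v i * tmul A x i := by
  rw [← Equiv.sum_comp (Fin.consEquiv (fun _ : Fin (k+1) => Fin n))]
  rw [Fintype.sum_prod_type]
  simp only [tmul, Finset.mul_sum]
  congr 1; ext i; congr 1; ext f
  rw [prod_erase_zero]
  simp [Fin.consEquiv]; ring

lemma Dp_eq_D0 {n k : ℕ} (A : (Fin (k + 1) → Fin n) → ℝ) (hsym : TSymmetric A)
    (x v : Fin n → ℝ) (p : Fin (k+1)) :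
    ∑ g : Fin (k+1) → Fin n, A g * (v (g p) * ∏ j ∈ (univ : Finset (Fin (k+1))).erase p, x (g j))
      = ∑ g : Fin (k+1) → Fin n, A g * (v (g 0) * ∏ j ∈ (univ : Finset (Fin (k+1))).erase 0, x (g j)) := by
  set σ := Equiv.swap (0 : Fin (k+1)) p with hσ
  refine (Fintype.sum_equiv ((Equiv.arrowCongr σ (Equiv.refl (Fin n))).symm) _ _ ?_).symm
  intro g
  have h1 : ((Equiv.arrowCongr σ (Equiv.refl (Fin n))).symm g) = g ∘ σ := by
    ext j; simp [Equiv.arrowCongr, hσ, Equiv.symm_swap]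
  rw [h1, hsym σ g]
  have h2 : (g ∘ σ) p = g 0 := by simp [hσ]
  rw [h2]
  congr 1
  congr 1
  have him : ∏ j ∈ ((univ : Finset (Fin (k+1))).erase p).image σ, x (g j)
      = ∏ j ∈ (univ : Finset (Fin (k+1))).erase p, x (g (σ j)) :=
    Finset.prod_image (fun a _ b _ h => σ.injective h)
  show _ = ∏ j ∈ (univ : Finset (Fin (k+1))).erase p, x (g (σ j))
  rw [← him]
  congr 1
  rw [Finset.image_erase σ.injective]
  simp [hσ]

lemma hasDerivAt_tpow {n k : ℕ} (A : (Fin (k + 1) → Fin n) → ℝ) (hsym : TSymmetric A)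
    (x v : Fin n → ℝ) :
    HasDerivAt (fun t : ℝ => tpow A (fun j => x j + t * v j))
      ((k + 1 : ℝ) * ∑ i, v i * tmul A x i) 0 := by
  have key : ∀ t : ℝ, tpow A (fun j => x j + t * v j)
      = ∑ g : Fin (k+1) → Fin n, A g * ∏ j, (x (g j) + t * v (g j)) := fun t => tpow_eq_sum A _
  simp only [key]
  have hder : ∀ g : Fin (k+1) → Fin n,
      HasDerivAt (fun t : ℝ => A g * ∏ j, (x (g j) + t * v (g j)))
        (A g * ∑ p, (∏ j ∈ (univ : Finset (Fin (k+1))).erase p, x (g j)) * v (g p)) 0 := by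
    intro g
    have h : ∀ p ∈ (univ : Finset (Fin (k+1))),
        HasDerivAt (fun t : ℝ => x (g p) + t * v (g p)) (v (g p)) 0 := by
      intro p _
      simpa using ((hasDerivAt_id (0:ℝ)).mul_const (v (g p))).const_add (x (g p))
    have := (HasDerivAt.finset_prod h).const_mul (A g)
    simpa [smul_eq_mul] using this
  have hsum := HasDerivAt.fun_sum (u := (univ : Finset (Fin (k+1) → Fin n))) (fun g _ => hder g)
  convert hsum using 1
  · rfl
  · rfl
  have hrhs : ∑ g : Fin (k+1) → Fin n, A g * ∑ p, (∏ j ∈ (univ : Finset (Fin (k+1))).erase p, x (g j)) * v (g p)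
      = ∑ p : Fin (k+1), ∑ g : Fin (k+1) → Fin n, A g * (v (g p) * ∏ j ∈ (univ : Finset (Fin (k+1))).erase p, x (g j)) := by
    simp_rw [Finset.mul_sum]
    rw [Finset.sum_comm]
    congr 1; ext p; congr 1; ext g; ring
  rw [hrhs]
  have heach : ∀ p : Fin (k+1), ∑ g : Fin (k+1) → Fin n, A g * (v (g p) * ∏ j ∈ (univ : Finset (Fin (k+1))).erase p, x (g j)) = ∑ i, v i * tmul A x i :=
    fun p => (Dp_eq_D0 A hsym x v p).trans (sum_v_tmul A x v)
  rw [Finset.sum_congr rfl (fun p _ => heach p), Finset.sum_const]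
  simp [card_univ, mul_comm]

lemma tpow_smul {n k : ℕ} (A : (Fin (k + 1) → Fin n) → ℝ) (c : ℝ) (x : Fin n → ℝ) :
    tpow A (fun j => c * x j) = c ^ (k + 1) * tpow A x := by
  simp only [tpow_eq_sum, Finset.mul_sum]
  congr 1; ext g
  rw [Finset.prod_mul_distrib, Finset.prod_const, card_univ, Fintype.card_fin]
  ring

lemma tpow_continuous {n k : ℕ} (A : (Fin (k + 1) → Fin n) → ℝ) :
    Continuous (tpow A) := by
  have : (tpow A) = fun x => ∑ g : Fin (k + 1) → Fin n, A g * ∏ j, x (g j) := by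
    ext x; exact tpow_eq_sum A x
  rw [this]
  exact continuous_finset_sum _ fun g _ =>
    continuous_const.mul (continuous_finset_prod _ fun j _ => continuous_apply _)

lemma pnorm_two_eq_one_iff {n : ℕ} (y : Fin n → ℝ) :
    pnorm 2 y = 1 ↔ ∑ i, y i ^ 2 = 1 := by
  have h2 : ∑ i, |y i| ^ (2:ℝ) = ∑ i, y i ^ 2 := by
    congr 1; ext i
    rw [show (2:ℝ) = ((2:ℕ):ℝ) by norm_num, Real.rpow_natCast, sq_abs]
  unfold pnorm
  rw [h2]
  constructor
  · intro h
    have hs : (0:ℝ) ≤ ∑ i, y i ^ 2 := Finset.sum_nonneg fun i _ => sq_nonneg _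
    have := congrArg (fun t : ℝ => t ^ (2:ℝ)) h
    simp only [← Real.rpow_mul hs] at this
    norm_num at this
    exact this
  · intro h; rw [h]; exact Real.one_rpow _

lemma rpow_half_pow {s : ℝ} (hs : 0 < s) (k : ℕ) :
    s ^ (((k:ℝ)+1)/2) = Real.sqrt s ^ (k+1) := by
  nth_rewrite 1 [← Real.sq_sqrt hs.le]
  rw [← Real.rpow_natCast (Real.sqrt s) 2, ← Real.rpow_mul (Real.sqrt_nonneg s),
    ← Real.rpow_natCast (Real.sqrt s) (k+1)]
  congr 1
  push_cast; ring

lemma sumsq_pos {n : ℕ} {x : Fin n → ℝ} (hx : x ≠ 0) : 0 < ∑ i, x i ^ 2 := by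
  obtain ⟨i, hi⟩ := Function.ne_iff.1 hx
  exact Finset.sum_pos' (fun j _ => sq_nonneg _) ⟨i, Finset.mem_univ i,
    pow_pos (abs_pos.2 hi) 2 |>.trans_eq (sq_abs _)⟩


theorem stmt17 {n k : ℕ} (hn : 1 ≤ n) (hk : 1 ≤ k) (A : (Fin (k + 1) → Fin n) → ℝ)
    (hsym : TSymmetric A)
    (hsc : ∀ x : Fin n → ℝ, (∀ i, 0 ≤ x i) → x ≠ 0 → 0 < tpow A x) :
    0 < sInf {r : ℝ | ∃ y : Fin n → ℝ,
        (∀ i, 0 ≤ y i) ∧ pnorm 2 y = 1 ∧ tpow A y = r} ∧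
    ParetoZ A (sInf {r : ℝ | ∃ y : Fin n → ℝ,
        (∀ i, 0 ≤ y i) ∧ pnorm 2 y = 1 ∧ tpow A y = r}) ∧
    ∀ μ : ℝ, ParetoZ A μ →
      sInf {r : ℝ | ∃ y : Fin n → ℝ,
        (∀ i, 0 ≤ y i) ∧ pnorm 2 y = 1 ∧ tpow A y = r} ≤ μ := by
  haveI : NeZero n := ⟨Nat.one_le_iff_ne_zero.mp hn⟩
  set S : Set (Fin n → ℝ) := {y | (∀ i, 0 ≤ y i) ∧ pnorm 2 y = 1} with hS
  set T : Set ℝ := {r : ℝ | ∃ y : Fin n → ℝ,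
        (∀ i, 0 ≤ y i) ∧ pnorm 2 y = 1 ∧ tpow A y = r} with hTdef
  -- nonzero on S
  have hne0 : ∀ y ∈ S, y ≠ 0 := by
    rintro y ⟨h1, h2⟩ rfl
    rw [pnorm_two_eq_one_iff] at h2
    simp at h2
  -- S is compact
  have hclosed : IsClosed S := by
    have : S = {y : Fin n → ℝ | ∀ i, 0 ≤ y i} ∩ {y | ∑ i, y i ^ 2 = 1} := by
      ext y; simp [hS, pnorm_two_eq_one_iff]
    rw [this]
    refine IsClosed.inter ?_ ?_
    · have : {y : Fin n → ℝ | ∀ i, 0 ≤ y i} = ⋂ i, {y : Fin n → ℝ | 0 ≤ y i} := by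
        ext y; simp
      rw [this]
      exact isClosed_iInter fun i => isClosed_le continuous_const (continuous_apply i)
    · exact isClosed_eq (continuous_finset_sum _ fun i _ => (continuous_apply i).pow 2)
        continuous_const
  have hbdd : S ⊆ Metric.closedBall 0 1 := by
    rintro y ⟨h1, h2⟩
    rw [pnorm_two_eq_one_iff] at h2
    rw [Metric.mem_closedBall, dist_zero_right]
    refine (pi_norm_le_iff_of_nonneg zero_le_one).2 fun i => ?_
    rw [Real.norm_eq_abs, ← Real.sqrt_sq_eq_abs]
    refine Real.sqrt_le_one.2 ?_
    calc y i ^ 2 ≤ ∑ j, y j ^ 2 :=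
          Finset.single_le_sum (fun j _ => sq_nonneg (y j)) (Finset.mem_univ i)
      _ = 1 := h2
  have hScpt : IsCompact S :=
    (isCompact_closedBall 0 1).of_isClosed_subset hclosed hbdd
  have hSne : S.Nonempty := by
    refine ⟨Pi.single 0 1, fun i => ?_, ?_⟩
    · rcases eq_or_ne i 0 with rfl | h
      · simp
      · simp [Pi.single_apply, h]
    · rw [pnorm_two_eq_one_iff]
      simp [Pi.single_apply]
  obtain ⟨y₀, hy₀S, hmin⟩ := hScpt.exists_isMinOn hSne (tpow_continuous A).continuousOn
  set μ := tpow A y₀ with hμ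
  have hy₀sq : ∑ i, y₀ i ^ 2 = 1 := (pnorm_two_eq_one_iff y₀).1 hy₀S.2
  have hy₀ne : y₀ ≠ 0 := hne0 y₀ hy₀S
  have hleast : IsLeast T μ := by
    constructor
    · exact ⟨y₀, hy₀S.1, hy₀S.2, rfl⟩
    · rintro r ⟨y, h1, h2, rfl⟩
      exact hmin ⟨h1, h2⟩
  have hInf : sInf T = μ := hleast.csInf_eq
  have hbddT : BddBelow T := ⟨μ, hleast.2⟩
  have hμpos : 0 < μ := hsc y₀ hy₀S.1 hy₀ne
  -- key inequality
  have key : ∀ z : Fin n → ℝ, (∀ i, 0 ≤ z i) → z ≠ 0 →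
      μ * (∑ i, z i ^ 2) ^ (((k:ℝ)+1)/2) ≤ tpow A z := by
    intro z hz hzne
    have hs : 0 < ∑ i, z i ^ 2 := sumsq_pos hzne
    set r := Real.sqrt (∑ i, z i ^ 2) with hr
    have hrpos : 0 < r := Real.sqrt_pos.2 hs
    set w : Fin n → ℝ := fun j => r⁻¹ * z j with hw
    have hwS : w ∈ S := by
      refine ⟨fun i => mul_nonneg (inv_nonneg.2 hrpos.le) (hz i), ?_⟩
      rw [pnorm_two_eq_one_iff]
      simp only [hw, mul_pow, ← Finset.mul_sum]
      rw [← Real.sq_sqrt hs.le, ← hr]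
      field_simp
    have h1 : μ ≤ tpow A w := hmin hwS
    have h2 : tpow A w = r⁻¹ ^ (k+1) * tpow A z := tpow_smul A r⁻¹ z
    rw [rpow_half_pow hs, ← hr]
    have := mul_le_mul_of_nonneg_left h1 (le_of_lt (pow_pos hrpos (k+1)))
    calc μ * r ^ (k+1) = r ^ (k+1) * μ := by ring
      _ ≤ r ^ (k+1) * tpow A w := this
      _ = tpow A z := by
          rw [h2, ← mul_assoc, ← mul_pow, mul_inv_cancel₀ hrpos.ne', one_pow, one_mul]
  refine ⟨by rw [hInf]; exact hμpos, ?_, ?_⟩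
  · -- μ is a Pareto Z-eigenvalue, witness y₀
    rw [hInf]
    refine ⟨y₀, hy₀ne, hy₀S.1, by rw [hy₀sq, Real.one_rpow, mul_one], ?_⟩
    intro i
    rw [hy₀sq, Real.one_rpow, mul_one]
    -- derivative argument
    set v : Fin n → ℝ := Pi.single i 1 with hv
    have hvsum : ∑ j, v j * tmul A y₀ j = tmul A y₀ i := by
      rw [Finset.sum_eq_single i]
      · simp [hv]
      · intro b _ hb; simp [hv, Pi.single_apply, hb]
      · simp
    have hvnn : ∀ j, 0 ≤ v j := by
      intro j
      rcases eq_or_ne j i with rfl | h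
      · simp [hv]
      · simp [hv, Pi.single_apply, h]
    set F : ℝ → ℝ := fun t => tpow A (fun j => y₀ j + t * v j)
      - μ * (∑ j, (y₀ j + t * v j) ^ 2) ^ (((k:ℝ)+1)/2) with hF
    -- derivative of G t = ∑ (y₀ j + t v j)^2
    have hG : HasDerivAt (fun t : ℝ => ∑ j, (y₀ j + t * v j) ^ 2) (2 * y₀ i) 0 := by
      have h : ∀ j ∈ (univ : Finset (Fin n)),
          HasDerivAt (fun t : ℝ => (y₀ j + t * v j) ^ 2) (2 * y₀ j * v j) 0 := by
        intro j _
        have hlin : HasDerivAt (fun t : ℝ => y₀ j + t * v j) (v j) 0 := by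
          simpa using ((hasDerivAt_id (0:ℝ)).mul_const (v j)).const_add (y₀ j)
        have := hlin.fun_pow 2
        simpa using this
      have := HasDerivAt.fun_sum h
      convert this using 1
      · rfl
      · rfl
      rw [Finset.sum_eq_single i]
      · simp [hv]
      · intro b _ hb; simp [hv, Pi.single_apply, hb]
      · simp
    have hG0 : ∑ j, (y₀ j + (0:ℝ) * v j) ^ 2 = 1 := by simpa using hy₀sq
    have hH : HasDerivAt (fun t : ℝ => (∑ j, (y₀ j + t * v j) ^ 2) ^ (((k:ℝ)+1)/2))
        (((k:ℝ)+1) * y₀ i) 0 := by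
      have := hG.rpow_const (p := ((k:ℝ)+1)/2) (Or.inl (by rw [hG0]; norm_num))
      convert this using 1
      rw [hG0, Real.one_rpow]
      ring
    have hFd : HasDerivAt F ((k+1 : ℝ) * tmul A y₀ i - μ * (((k:ℝ)+1) * y₀ i)) 0 := by
      have h1 := hasDerivAt_tpow A hsym y₀ v
      rw [hvsum] at h1
      exact h1.sub ((hH.const_mul μ))
    have hF0 : F 0 = 0 := by
      simp only [hF, hG0, Real.one_rpow, mul_one]
      simp [hμ]
    have hFnn : ∀ t : ℝ, 0 < t → 0 ≤ F t := by
      intro t ht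
      have hz : ∀ j, 0 ≤ y₀ j + t * v j := fun j => add_nonneg (hy₀S.1 j)
        (mul_nonneg ht.le (hvnn j))
      have hzne : (fun j => y₀ j + t * v j) ≠ 0 := by
        intro hc
        obtain ⟨j, hj⟩ := Function.ne_iff.1 hy₀ne
        have h0 : 0 ≤ y₀ j := hy₀S.1 j
        have := congrFun hc j
        simp only [Pi.zero_apply] at this
        have hvj : 0 ≤ t * v j := mul_nonneg ht.le (hvnn j)
        have : y₀ j = 0 := le_antisymm (by linarith) h0
        exact hj this
      have := key _ hz hzne
      simp only [hF]
      linarith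
    -- derivative nonneg
    have hd : 0 ≤ (k+1 : ℝ) * tmul A y₀ i - μ * (((k:ℝ)+1) * y₀ i) := by
      have hslope := hFd.hasDerivWithinAt (s := Set.Ioi (0:ℝ))
      have htend : Filter.Tendsto (slope F 0) (nhdsWithin 0 (Set.Ioi 0))
          (nhds ((k+1 : ℝ) * tmul A y₀ i - μ * (((k:ℝ)+1) * y₀ i))) := by
        have := (hasDerivWithinAt_iff_tendsto_slope.1 hslope)
        refine this.mono_left (nhdsWithin_mono _ ?_)
        intro t ht
        exact ⟨ht, by simp; exact ne_of_gt ht⟩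
      refine ge_of_tendsto htend ?_
      filter_upwards [self_mem_nhdsWithin] with t ht
      have htpos : (0:ℝ) < t := ht
      have hfn := hFnn t ht
      rw [slope_def_field, hF0]
      have : (0:ℝ) < t := ht
      apply div_nonneg (by linarith) (by linarith)
    have hk1 : (0:ℝ) < (k:ℝ) + 1 := by positivity
    nlinarith [hd]
  · -- minimality
    rintro μ' ⟨x, hxne, hxnn, hxeq, _⟩
    have hs : 0 < ∑ i, x i ^ 2 := sumsq_pos hxne
    set r := Real.sqrt (∑ i, x i ^ 2) with hr
    have hrpos : 0 < r := Real.sqrt_pos.2 hs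
    have hmem : μ' ∈ T := by
      refine ⟨fun j => r⁻¹ * x j, fun i => mul_nonneg (inv_nonneg.2 hrpos.le) (hxnn i), ?_, ?_⟩
      · rw [pnorm_two_eq_one_iff]
        simp only [mul_pow, ← Finset.mul_sum]
        rw [← Real.sq_sqrt hs.le, ← hr]
        field_simp
      · rw [tpow_smul, hxeq, rpow_half_pow hs, ← hr]
        rw [← mul_assoc, mul_comm (r⁻¹ ^ (k+1)) μ', mul_assoc, ← mul_pow,
          inv_mul_cancel₀ hrpos.ne', one_pow, mul_one]
    exact csInf_le hbddT hmem
end
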